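/- arXiv:2004.12953 — 9 statements merged into one kernel-verified Lean document; each statement's English description precedes it below -/
import Mathlib

section
/- Let C be a set and (X, θ) a contramodule over C (i.e., θ: (C → X) → X satisfies contraunitality: θ of a constant function with value x equals x; and contraassociativity: for every γ: C × C → X, θ(a ↦ θ(b ↦ γ(a,b))) = θ(a ↦ γ(a,a))). Fix u ∈ X and define π_a: X → X by π_a(x) = θ(δ_{a,x}) where δ_{a,x}(b) = x if b = a and u otherwise. Then π_a(π_a(x)) = π_a(x) for all a ∈ C and x ∈ X. -/
/- Contraassociativity for `γ b c = if b = a then g c else u`; contraunitality turns the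
inner `θ` of the constant `u` back into `u`. -/
theorem contra_ite_theta_eq {C X : Type*} [DecidableEq C] {θ : (C → X) → X}
    (hunit : ∀ x : X, θ (fun _ => x) = x)
    (hassoc : ∀ γ : C → C → X, θ (fun a => θ (fun b => γ a b)) = θ (fun a => γ a a))
    (a : C) (u : X) (g : C → X) :
    θ (fun b => if b = a then θ g else u) = θ (fun b => if b = a then g b else u) := by
  calc θ (fun b => if b = a then θ g else u)
      = θ (fun b => θ (fun c => if b = a then g c else u)) := by
        congr 1; funext b; split_ifs <;> simp [hunit]
    _ = θ (fun b => if b = a then g b else u) := hassoc _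

/-- For a contramodule `(X, θ)` over a set `C`, with `π_a x = θ (δ_{a,x})`,
the maps `π_a` are idempotent: `π_a (π_a x) = π_a x`. -/
theorem stmt_2 (C X : Type*) [DecidableEq C] (θ : (C → X) → X)
    (hunit : ∀ x : X, θ (fun _ => x) = x)
    (hassoc : ∀ γ : C → C → X,
      θ (fun a => θ (fun b => γ a b)) = θ (fun a => γ a a))
    (u : X) (π : C → X → X)
    (hπ : ∀ a x, π a x = θ (fun b => if b = a then x else u)) :
    ∀ (a : C) (x : X), π a (π a x) = π a x := by
  intro a x
  rw [hπ a (π a x), hπ a x, contra_ite_theta_eq hunit hassoc]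
  congr 1; funext b; split_ifs <;> rfl
end

section
/- Let C be a set, (X, θ) a contramodule over C, and fix u ∈ X. Define π_a(x) = θ(δ_{a,x}) with δ_{a,x}(b) = x if b = a and u otherwise. Then for distinct a, b ∈ C, π_a(π_b(x)) = u for all x ∈ X. -/
/-! The inner `θ` can be absorbed: on the branch where the condition fails it is `θ` of a
constant, so associativity applies to `γ c d = if c = a then δ_{b,x}(d) else u`, whose
diagonal is constantly `u` because no `c` equals both `a` and `b`. -/

section Contramodule

variable {C X : Type*} {θ : (C → X) → X}

theorem theta_ite_theta_eq (hunit : ∀ x : X, θ (fun _ => x) = x)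
    (hassoc : ∀ γ : C → C → X,
      θ (fun a => θ (fun b => γ a b)) = θ (fun a => γ a a))
    (p : C → Prop) [DecidablePred p] (f : C → X) (y : X) :
    θ (fun c => if p c then θ f else y) = θ (fun c => if p c then f c else y) := by
  have inner : (fun c => if p c then θ f else y)
      = fun c => θ (fun d => if p c then f d else y) := by
    funext c
    split_ifs
    · rfl
    · exact (hunit y).symm
  rw [inner, hassoc]

end Contramodule

/-- For a contramodule `(X, θ)` over a set `C`, with `π_a x = θ (δ_{a,x})`,
distinct indices give `π_a (π_b x) = u`. -/
theorem stmt_3 (C X : Type*) [DecidableEq C] (θ : (C → X) → X)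
    (hunit : ∀ x : X, θ (fun _ => x) = x)
    (hassoc : ∀ γ : C → C → X,
      θ (fun a => θ (fun b => γ a b)) = θ (fun a => γ a a))
    (u : X) (π : C → X → X)
    (hπ : ∀ a x, π a x = θ (fun b => if b = a then x else u)) :
    ∀ (a b : C), a ≠ b → ∀ x : X, π a (π b x) = u := by
  intro a b hab x
  have diagonal : (fun c => if c = a then (if c = b then x else u) else u) = fun _ => u := by
    funext c
    split_ifs with hca hcb
    · exact absurd (hca.symm.trans hcb) hab
    all_goals rfl
  simp only [hπ]
  rw [theta_ite_theta_eq hunit hassoc, diagonal, hunit]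
end

section
/- Let C be a set, (X, θ) a contramodule over C, u ∈ X, and π_a as above. Then for every function β: C → X and every a ∈ C, π_a(θ(β)) = π_a(β(a)). -/
/-! Apply the row-diagonal identity to `γ b c = if p b then β c else u`: each inner row is
either `θ β` or `θ (const u) = u`, while the diagonal is `if p b then β b else u`. For
`p b ↔ b = a` the diagonal agrees with `δ_{a, β a}`. -/

theorem theta_ite_theta {C X : Type*} (θ : (C → X) → X)
    (hunit : ∀ x : X, θ (fun _ => x) = x)
    (hassoc : ∀ γ : C → C → X, θ (fun a => θ (fun b => γ a b)) = θ (fun a => γ a a))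
    (p : C → Prop) [DecidablePred p] (β : C → X) (u : X) :
    θ (fun b => if p b then θ β else u) = θ (fun b => if p b then β b else u) := by
  have hrow : (fun b => if p b then θ β else u) =
      fun b => θ (fun c => if p b then β c else u) := by
    funext b
    split_ifs
    · rfl
    · exact (hunit u).symm
  rw [hrow, hassoc (fun b c => if p b then β c else u)]

/-- For a contramodule `(X, θ)` over a set `C`, with `π_a x = θ (δ_{a,x})`,
one has `π_a (θ β) = π_a (β a)` for every `β : C → X`. -/
theorem stmt_4 (C X : Type*) [DecidableEq C] (θ : (C → X) → X)
    (hunit : ∀ x : X, θ (fun _ => x) = x)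
    (hassoc : ∀ γ : C → C → X,
      θ (fun a => θ (fun b => γ a b)) = θ (fun a => γ a a))
    (u : X) (π : C → X → X)
    (hπ : ∀ a x, π a x = θ (fun b => if b = a then x else u)) :
    ∀ (β : C → X) (a : C), π a (θ β) = π a (β a) := by
  intro β a
  rw [hπ, hπ, theta_ite_theta θ hunit hassoc (· = a) β u]
  congr 1
  funext b
  split_ifs with hb
  · rw [hb]
  · rfl
end

section
/- Let C be a set, (X, θ) a contramodule over C, u ∈ X, π_a(x) = θ(δ_{a,x}) as above, and X_a = image of π_a. If β: C → X satisfies β(a) ∈ X_a for all a ∈ C, then π_a(θ(β)) = β(a) for all a ∈ C. -/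
/-!
Writing `θ f` as `θ (b ↦ θ f)` by the unit law and then collapsing the double application by the
row-diagonal law shows `π_a (θ f) = π_a (f a)` for every `f : C → X`. Applied to `f = β` this
gives `π_a (θ β) = π_a (β a)`, and applied to `f = δ_{a,x}` it shows that `π_a` is idempotent,
so it fixes `β a ∈ X_a`.
-/

section Contramodule

variable {C X : Type*} [DecidableEq C] {θ : (C → X) → X}

theorem theta_ite_theta_eq_theta_ite_apply (hunit : ∀ x : X, θ (fun _ => x) = x)
    (hassoc : ∀ γ : C → C → X, θ (fun a => θ (fun b => γ a b)) = θ (fun a => γ a a))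
    (u : X) (a : C) (f : C → X) :
    θ (fun b => if b = a then θ f else u) = θ (fun b => if b = a then f a else u) :=
  calc θ (fun b => if b = a then θ f else u)
      = θ (fun b => θ (fun c => if b = a then f c else u)) := by
        congr 1; funext b; split_ifs <;> simp [hunit]
    _ = θ (fun b => if b = a then f b else u) := hassoc fun b c => if b = a then f c else u
    _ = θ (fun b => if b = a then f a else u) := by
        congr 1; funext b; split_ifs with hb <;> simp [hb]

end Contramodule

/-- For a contramodule `(X, θ)` over a set `C`, with `π_a x = θ (δ_{a,x})` and
`X_a = range (π_a)`: if `β a ∈ X_a` for all `a`, then `π_a (θ β) = β a`. -/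
theorem stmt_5 (C X : Type*) [DecidableEq C] (θ : (C → X) → X)
    (hunit : ∀ x : X, θ (fun _ => x) = x)
    (hassoc : ∀ γ : C → C → X,
      θ (fun a => θ (fun b => γ a b)) = θ (fun a => γ a a))
    (u : X) (π : C → X → X)
    (hπ : ∀ a x, π a x = θ (fun b => if b = a then x else u))
    (β : C → X) (hβ : ∀ a : C, β a ∈ Set.range (π a)) :
    ∀ a : C, π a (θ β) = β a := by
  intro a
  obtain ⟨x, hx⟩ := hβ a
  have idem : π a (π a x) = π a x := by
    simpa only [hπ, if_true] using
      theta_ite_theta_eq_theta_ite_apply hunit hassoc u a fun b => if b = a then x else u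
  rw [hπ, theta_ite_theta_eq_theta_ite_apply hunit hassoc, ← hπ, ← hx, idem]
end

section
/- Let C be a set and (X, θ) a contramodule over C. Then for every x ∈ X, θ(a ↦ π_a(x)) = x, where π_a(x) = θ(δ_{a,x}) is defined with respect to any fixed u ∈ X. Consequently the map π: X → ∏_{a∈C} X_a, x ↦ (π_a(x))_a is injective with left inverse given by the restriction of θ. -/
/- Apply the row-diagonal identity to the matrix `γ a b = δ_{a,x}(b)`: its diagonal is constantly
`x`, so `θ (fun a => π_a x) = θ (fun _ => x) = x`. -/

theorem theta_theta_ite_eq_self {C X : Type*} [DecidableEq C] {θ : (C → X) → X}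
    (hunit : ∀ x : X, θ (fun _ => x) = x)
    (hassoc : ∀ γ : C → C → X, θ (fun a => θ (fun b => γ a b)) = θ (fun a => γ a a))
    (x u : X) :
    θ (fun a => θ (fun b => if b = a then x else u)) = x := by
  rw [hassoc (fun a b => if b = a then x else u)]
  simpa only [if_true] using hunit x

/-- For a contramodule `(X, θ)` over a set `C`, `θ (fun a => π_a x) = x` for every `x`,
and consequently the map `x ↦ (π_a x)_a` is injective. -/
theorem stmt_6 (C X : Type*) [DecidableEq C] (θ : (C → X) → X)
    (hunit : ∀ x : X, θ (fun _ => x) = x)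
    (hassoc : ∀ γ : C → C → X,
      θ (fun a => θ (fun b => γ a b)) = θ (fun a => γ a a))
    (u : X) (π : C → X → X)
    (hπ : ∀ a x, π a x = θ (fun b => if b = a then x else u)) :
    (∀ x : X, θ (fun a => π a x) = x) ∧
      Function.Injective (fun (x : X) (a : C) => π a x) := by
  have hleft : Function.LeftInverse θ (fun (x : X) (a : C) => π a x) := fun x => by
    simpa only [hπ] using theta_theta_ite_eq_self hunit hassoc x u
  exact ⟨hleft, hleft.injective⟩
end

section
/- Let C be a set and (X, θ) a nonempty contramodule over C. Fix u ∈ X and define π_a, X_a as above. Then the map π = (π_a)_{a∈C}: X → ∏_{a∈C} X_a and the map σ: ∏_{a∈C} X_a → X given by σ(β) = θ(β) (viewing a family (x_a) with x_a ∈ X_a as a function C → X) are mutually inverse bijections. Moreover, π is an isomorphism of contramodules where ∏_{a∈C} X_a carries the product contramodule structure θ'(β)(a) = β(a)(a). -/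
/-!
The row-diagonal identity, applied to `γ c b = if c = a then f b else u` (with the unit law
rewriting the constant rows), gives `π_a (θ f) = π_a (f a)`: each `π_a` only sees the `a`-th
argument of `θ`. Hence `π_a` is idempotent, so it fixes `X_a`, and `π ∘ σ` is the identity.
Applied to `γ c b = if b = c then x else u`, the same identity gives `θ (a ↦ π_a x) = x`,
i.e. `σ ∘ π` is the identity.
-/

namespace Contramodule

variable {C X : Type*} [DecidableEq C]

def proj (θ : (C → X) → X) (u : X) (a : C) (x : X) : X :=
  θ fun b => if b = a then x else u

variable {θ : (C → X) → X} (hunit : ∀ x : X, θ (fun _ => x) = x)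
  (hassoc : ∀ γ : C → C → X, θ (fun a => θ (fun b => γ a b)) = θ (fun a => γ a a))
include hunit hassoc

theorem proj_theta (u : X) (a : C) (f : C → X) : proj θ u a (θ f) = proj θ u a (f a) := by
  have rows : (fun c => if c = a then θ f else u) =
      fun c => θ fun b => if c = a then f b else u := by
    funext c
    split_ifs <;> simp [hunit]
  unfold proj
  rw [rows, hassoc fun c b => if c = a then f b else u]
  congr 1
  funext c
  split_ifs with hc <;> simp [hc]

theorem proj_proj (u : X) (a : C) (x : X) : proj θ u a (proj θ u a x) = proj θ u a x := by
  have := proj_theta hunit hassoc u a fun b => if b = a then x else u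
  rwa [if_pos rfl] at this

theorem proj_eq_self_of_mem_range {u : X} {a : C} {y : X} (hy : y ∈ Set.range (proj θ u a)) :
    proj θ u a y = y := by
  obtain ⟨x, rfl⟩ := hy
  exact proj_proj hunit hassoc u a x

theorem theta_proj (u x : X) : θ (fun a => proj θ u a x) = x := by
  unfold proj
  rw [hassoc fun a b => if b = a then x else u]
  simpa using hunit x

end Contramodule

open Contramodule in
/-- Every nonempty contramodule `(X, θ)` over a set `C` is isomorphic, as a contramodule,
to the product `∏_{a ∈ C} X_a` of the images `X_a = range (π_a)`, via the mutually inverse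
maps `π = (π_a)_a` and `σ = θ` restricted to the product; moreover `π` commutes with the
contramodule structures (the product carrying `θ' β a = β a a`). -/
theorem stmt_7 (C X : Type*) [DecidableEq C] (θ : (C → X) → X)
    (hunit : ∀ x : X, θ (fun _ => x) = x)
    (hassoc : ∀ γ : C → C → X,
      θ (fun a => θ (fun b => γ a b)) = θ (fun a => γ a a))
    (u : X) (π : C → X → X)
    (hπ : ∀ a x, π a x = θ (fun b => if b = a then x else u))
    (π' : X → ∀ a : C, Set.range (π a))
    (hπ' : ∀ (x : X) (a : C), (π' x a : X) = π a x)
    (σ : (∀ a : C, Set.range (π a)) → X)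
    (hσ : ∀ β : ∀ a : C, Set.range (π a), σ β = θ (fun a => (β a : X))) :
    Function.LeftInverse σ π' ∧ Function.RightInverse σ π' ∧
      (∀ β : C → X, π' (θ β) = fun a => π' (β a) a) := by
  obtain rfl : π = proj θ u := funext fun a => funext (hπ a)
  refine ⟨fun x => ?_, fun β => funext fun a => Subtype.ext ?_,
    fun β => funext fun a => Subtype.ext ?_⟩
  · rw [hσ]
    simp only [hπ']
    exact theta_proj hunit hassoc u x
  · rw [hπ', hσ, proj_theta hunit hassoc, proj_eq_self_of_mem_range hunit hassoc (β a).2]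
  · rw [hπ', hπ', proj_theta hunit hassoc]
end

section
/- Let C be a set, X a set, and φ: X → C a surjective map. Consider the maps η, ν: (C → R(X)) × C → R(X) × C given by η(ψ, a) = (ψ(a), a) and ν(ψ, a) = (θ(ψ), a), where R(X) is the set of sections of φ with product contramodule structure θ(ψ)(c) = ψ(c)(c). Then the equivalence relation generated by the coequalizer relation (i.e., the relation identifying η(ψ,a) with ν(ψ,a) for all ψ, a) coincides with the relation: (β, a) ~ (γ, b) iff a = b and β(a) = γ(a). -/
/-!
Every identification `(ψ a, a) ∼ (θ ψ, a)` preserves the value of the section at the marked point,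
since `θ ψ a = ψ a a`; so `(β, a) ↦ β a` is constant on equivalence classes, and this value already
determines `a = φ (β a)`. Conversely, fix any section `s₀` (it exists because `φ` is surjective) and
let `ψ_β` be `s₀` except for `ψ_β a = β`. Then `(β, a) ∼ (θ ψ_β, a)`, and `θ ψ_β` is `s₀` patched by
the single value `β a`, so it equals `θ ψ_γ` as soon as `β a = γ a`.
-/

namespace SectionContramodule

variable {C X : Type*} {φ : X → C}

abbrev Sections (φ : X → C) : Type _ := {s : C → X // ∀ c, φ (s c) = c}

/-- The contramodule structure map `θ` of `R(X)`. -/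
def contract (ψ : C → Sections φ) : Sections φ :=
  ⟨fun c => (ψ c).1 c, fun c => (ψ c).2 c⟩

/-- The relation identifying `η (ψ, a)` with `ν (ψ, a)`. -/
def coeqRel (φ : X → C) (p q : Sections φ × C) : Prop :=
  ∃ (ψ : C → Sections φ) (a : C), p = (ψ a, a) ∧ q = (contract ψ, a)

def eval (p : Sections φ × C) : X := p.1.1 p.2

theorem eval_eq_iff {p q : Sections φ × C} :
    eval p = eval q ↔ p.2 = q.2 ∧ p.1.1 p.2 = q.1.1 q.2 := by
  refine ⟨fun h => ⟨?_, h⟩, fun h => h.2⟩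
  rw [← p.1.2 p.2, ← q.1.2 q.2]
  exact congrArg φ h

theorem eval_eq_of_coeqRel {p q : Sections φ × C} (h : coeqRel φ p q) : eval p = eval q := by
  obtain ⟨ψ, a, rfl, rfl⟩ := h
  rfl

theorem eval_eq_of_eqvGen_coeqRel {p q : Sections φ × C}
    (h : Relation.EqvGen (coeqRel φ) p q) : eval p = eval q :=
  congrArg (Quot.lift eval fun _ _ => eval_eq_of_coeqRel) (Quot.eqvGen_sound h)

theorem coeqRel_update [DecidableEq C] (s₀ β : Sections φ) (a : C) :
    coeqRel φ (β, a) (contract (Function.update (fun _ => s₀) a β), a) :=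
  ⟨_, a, by rw [Function.update_self], rfl⟩

theorem contract_update_eq_of_apply_eq [DecidableEq C] (s₀ : Sections φ) {β γ : Sections φ} {a : C}
    (h : β.1 a = γ.1 a) :
    contract (Function.update (fun _ => s₀) a β) = contract (Function.update (fun _ => s₀) a γ) := by
  ext c
  by_cases hc : c = a
  · subst hc
    simp [contract, h]
  · simp [contract, Function.update_of_ne hc]

theorem eqvGen_coeqRel_of_eval_eq [DecidableEq C] (s₀ : Sections φ) {p q : Sections φ × C}
    (h : eval p = eval q) : Relation.EqvGen (coeqRel φ) p q := by
  obtain ⟨β, a⟩ := p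
  obtain ⟨γ, b⟩ := q
  obtain ⟨rfl, hβγ⟩ := eval_eq_iff.mp h
  have hγ := Relation.EqvGen.rel _ _ (coeqRel_update s₀ γ a)
  rw [← contract_update_eq_of_apply_eq s₀ hβγ] at hγ
  exact (Relation.EqvGen.rel _ _ (coeqRel_update s₀ β a)).trans _ _ _ hγ.symm

end SectionContramodule

/-- For a surjective `φ : X → C` and `R(X)` the set of sections of `φ` with its product
contramodule structure `θ ψ = fun c => ψ c c`, the equivalence relation generated by
identifying `η(ψ, a) = (ψ a, a)` with `ν(ψ, a) = (θ ψ, a)` coincides with the relation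
`(β, a) ∼ (γ, b) ↔ a = b ∧ β a = γ b`. -/
theorem stmt_10 (C X : Type*) (φ : X → C) (hφ : Function.Surjective φ) :
    ∀ p q : {s : C → X // ∀ c, φ (s c) = c} × C,
      Relation.EqvGen
        (fun p q : {s : C → X // ∀ c, φ (s c) = c} × C =>
          ∃ (ψ : C → {s : C → X // ∀ c, φ (s c) = c}) (a : C),
            p = (ψ a, a) ∧
            q = (⟨fun c => (ψ c).1 c, fun c => (ψ c).2 c⟩, a)) p q ↔
      (p.2 = q.2 ∧ p.1.1 p.2 = q.1.1 q.2) := by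
  classical
  intro p q
  rw [← SectionContramodule.eval_eq_iff]
  exact ⟨SectionContramodule.eval_eq_of_eqvGen_coeqRel,
    SectionContramodule.eqvGen_coeqRel_of_eval_eq ⟨Function.surjInv hφ, Function.surjInv_eq hφ⟩⟩
end

section
/- Let C be a set, viewed as the diagonal comonoid in Sets. The functor R sending a C-comodule (X, φ: X → C) to its set of sections, and the functor L sending a contramodule (Y, θ) to the coequalizer of the two maps η(β,a) = (β(a),a) and ν(β,a) = (θ(β),a) from (C → Y) × C to Y × C, restrict to mutually quasi-inverse equivalences between the category of C-comodules with surjective structure map and the category of nonempty C-contramodules. -/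
/-!
Sections of a nondegenerate comodule form a contramodule under `θ β = fun c => β c c`, and the
counit `[s, c] ↦ s c` is bijective because two sections agreeing at `c` are identified in the
coequalizer by gluing them along `c`. Conversely, in a contramodule with a point `z`, the element
`θ (update (const z) c y)` is an invariant of the class `[(y, c)]`, and the row-diagonal identity
recovers `y` from these invariants; this makes the unit injective, and it is surjective since a
section `c ↦ [(β c, c)]` of the coequalizer is the image of `θ β`.
-/

open CategoryTheory

universe u

/-- A `C`-comodule in `Sets` with surjective (nondegenerate) structure map:
a set over `C` with surjective projection. -/
structure NondegComod (C : Type u) : Type (u + 1) where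
  X : Type u
  φ : X → C
  surj : Function.Surjective φ

instance (C : Type u) : Category (NondegComod C) where
  Hom A B := {f : A.X → B.X // ∀ x, B.φ (f x) = A.φ x}
  id A := ⟨id, fun _ => rfl⟩
  comp f g := ⟨g.1 ∘ f.1, fun x => (g.2 (f.1 x)).trans (f.2 x)⟩

/-- A nonempty contramodule over the set `C`: a nonempty set `Y` with a structure map
`θ : (C → Y) → Y` satisfying contraunitality and the row-diagonal identity. -/
structure NeContramod (C : Type u) : Type (u + 1) where
  Y : Type u
  θ : (C → Y) → Y
  hunit : ∀ y : Y, θ (fun _ => y) = y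
  hassoc : ∀ γ : C → C → Y, θ (fun a => θ (fun b => γ a b)) = θ (fun a => γ a a)
  ne : Nonempty Y

instance (C : Type u) : Category (NeContramod C) where
  Hom A B := {f : A.Y → B.Y // ∀ β : C → A.Y, f (A.θ β) = B.θ (f ∘ β)}
  id A := ⟨id, fun _ => rfl⟩
  comp f g := ⟨g.1 ∘ f.1, fun β => by
    simp only [Function.comp_apply, f.2 β, g.2 (f.1 ∘ β)]
    rfl⟩

open Function

open scoped Classical

variable {C : Type u}

namespace NondegComod

theorem isIso_of_bijective {A B : NondegComod C} (f : A ⟶ B) (hf : Bijective f.1) :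
    IsIso f := by
  let e := Equiv.ofBijective _ hf
  exact ⟨⟨⟨e.symm, fun y => (f.2 _).symm.trans (congrArg B.φ (e.apply_symm_apply y))⟩,
    Subtype.ext (funext e.symm_apply_apply), Subtype.ext (funext e.apply_symm_apply)⟩⟩

noncomputable def sections (A : NondegComod C) : NeContramod C where
  Y := {s : C → A.X // ∀ c, A.φ (s c) = c}
  θ β := ⟨fun c => (β c).1 c, fun c => (β c).2 c⟩
  hunit _ := rfl
  hassoc _ := rfl
  ne := ⟨⟨surjInv A.surj, surjInv_eq A.surj⟩⟩

theorem exists_section_apply_eq (A : NondegComod C) (x : A.X) :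
    ∃ s : A.sections.Y, s.1 (A.φ x) = x := by
  refine ⟨⟨update (surjInv A.surj) (A.φ x) x, fun c => ?_⟩, by simp⟩
  rcases eq_or_ne c (A.φ x) with rfl | hc
  · rw [update_self]
  · rw [update_of_ne hc, surjInv_eq A.surj]

end NondegComod

namespace NeContramod

theorem isIso_of_bijective {A B : NeContramod C} (f : A ⟶ B) (hf : Bijective f.1) :
    IsIso f := by
  let e := Equiv.ofBijective _ hf
  refine ⟨⟨⟨e.symm, fun β => hf.1 ?_⟩,
    Subtype.ext (funext e.symm_apply_apply), Subtype.ext (funext e.apply_symm_apply)⟩⟩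
  change e (e.symm (B.θ β)) = f.1 (A.θ (e.symm ∘ β))
  rw [e.apply_symm_apply, f.2]
  exact congrArg B.θ (funext fun c => (e.apply_symm_apply (β c)).symm)

/-- The relation identifying `η(β, a) = (β a, a)` with `ν(β, a) = (θ β, a)`. -/
def Rel (B : NeContramod C) (p q : B.Y × C) : Prop :=
  ∃ (β : C → B.Y) (a : C), p = (β a, a) ∧ q = (B.θ β, a)

theorem mk_apply_eq_mk_θ (B : NeContramod C) (β : C → B.Y) (a : C) :
    Quot.mk B.Rel (β a, a) = Quot.mk B.Rel (B.θ β, a) :=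
  Quot.sound ⟨β, a, rfl, rfl⟩

noncomputable def coequalizer (B : NeContramod C) : NondegComod C where
  X := Quot B.Rel
  φ := Quot.lift Prod.snd (by rintro _ _ ⟨β, a, rfl, rfl⟩; rfl)
  surj c := ⟨Quot.mk _ (Classical.choice B.ne, c), rfl⟩

theorem exists_mk_eq_of_φ_eq (B : NeContramod C) {q : B.coequalizer.X} {c : C}
    (hq : B.coequalizer.φ q = c) : ∃ y : B.Y, Quot.mk B.Rel (y, c) = q := by
  subst hq
  induction q using Quot.ind with | mk p => exact ⟨p.1, rfl⟩

noncomputable def probe (B : NeContramod C) (z y : B.Y) (c : C) : B.Y :=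
  B.θ (update (fun _ => z) c y)

theorem probe_apply_eq_probe_θ (B : NeContramod C) (z : B.Y) (β : C → B.Y) (a : C) :
    B.probe z (β a) a = B.probe z (B.θ β) a := by
  have h := B.hassoc fun b => update (fun _ _ => z) a β b
  have hrow : (fun b => B.θ (update (fun _ _ => z) a β b)) = update (fun _ => z) a (B.θ β) := by
    funext b
    rcases eq_or_ne b a with rfl | hb
    · simp only [update_self]
    · simp only [update_of_ne hb, B.hunit]
  have hdiag : (fun b => update (fun _ _ => z) a β b b) = update (fun _ => z) a (β a) := by
    funext b
    rcases eq_or_ne b a with rfl | hb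
    · simp only [update_self]
    · simp only [update_of_ne hb]
  rw [hrow, hdiag] at h
  exact h.symm

theorem θ_probe (B : NeContramod C) (z y : B.Y) : B.θ (B.probe z y) = y := by
  have h := B.hassoc fun c => update (fun _ => z) c y
  simp only [update_self, B.hunit] at h
  exact h

noncomputable def probeQuot (B : NeContramod C) (z : B.Y) : B.coequalizer.X → B.Y :=
  Quot.lift (fun p => B.probe z p.1 p.2) <| by
    rintro _ _ ⟨β, a, rfl, rfl⟩
    exact B.probe_apply_eq_probe_θ z β a

end NeContramod

open NondegComod NeContramod

theorem sections_mk_eq_mk_of_apply_eq (A : NondegComod C) {s s' : A.sections.Y} {c : C}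
    (h : s.1 c = s'.1 c) : Quot.mk A.sections.Rel (s, c) = Quot.mk _ (s', c) := by
  have hθ : A.sections.θ (update (fun _ => s) c s') = s := by
    refine Subtype.ext (funext fun a => ?_)
    show (update (fun _ => s) c s' a).1 a = s.1 a
    rcases eq_or_ne a c with rfl | ha
    · rw [update_self, h]
    · rw [update_of_ne ha]
  rw [← hθ, ← mk_apply_eq_mk_θ, update_self]

/-- The functor `R`. -/
noncomputable def sectionsFunctor (C : Type u) : NondegComod C ⥤ NeContramod C where
  obj := sections
  map f := ⟨fun s => ⟨f.1 ∘ s.1, fun c => (f.2 _).trans (s.2 c)⟩, fun _ => rfl⟩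

/-- The functor `L`. -/
noncomputable def coequalizerFunctor (C : Type u) : NeContramod C ⥤ NondegComod C where
  obj := coequalizer
  map f :=
    ⟨Quot.map (Prod.map f.1 id) (by
        rintro _ _ ⟨β, a, rfl, rfl⟩
        exact ⟨f.1 ∘ β, a, rfl, by rw [Prod.map_apply, f.2]; rfl⟩),
      fun q => by induction q using Quot.ind with | mk p => rfl⟩
  map_id B := Subtype.ext <| funext fun q => by
    induction q using Quot.ind with | mk p => rfl
  map_comp f g := Subtype.ext <| funext fun q => by
    induction q using Quot.ind with | mk p => rfl

noncomputable def counit (C : Type u) : sectionsFunctor C ⋙ coequalizerFunctor C ⟶ 𝟭 _ where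
  app A := ⟨Quot.lift (fun p => p.1.1 p.2) (by rintro _ _ ⟨β, a, rfl, rfl⟩; rfl),
    fun q => by induction q using Quot.ind with | mk p => exact p.1.2 p.2⟩
  naturality _ _ _ := Subtype.ext <| funext fun q => by
    induction q using Quot.ind with | mk p => rfl

theorem counit_app_bijective (A : NondegComod C) : Bijective ((counit C).app A).1 := by
  constructor
  · rintro ⟨s, c⟩ ⟨s', c'⟩ (h : s.1 c = s'.1 c')
    obtain rfl : c = c' := by rw [← s.2 c, ← s'.2 c', h]
    exact sections_mk_eq_mk_of_apply_eq A h
  · intro x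
    obtain ⟨s, hs⟩ := exists_section_apply_eq A x
    exact ⟨Quot.mk _ (s, A.φ x), hs⟩

noncomputable def unit (C : Type u) : 𝟭 _ ⟶ coequalizerFunctor C ⋙ sectionsFunctor C where
  app B := ⟨fun y => ⟨fun c => Quot.mk _ (y, c), fun _ => rfl⟩,
    fun β => Subtype.ext <| funext fun c => (mk_apply_eq_mk_θ B β c).symm⟩

theorem unit_app_bijective (B : NeContramod C) : Bijective ((unit C).app B).1 := by
  obtain ⟨z⟩ := B.ne
  constructor
  · intro y y' h
    have hprobe : B.probe z y = B.probe z y' :=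
      funext fun c => congrArg (fun s : B.coequalizer.sections.Y => B.probeQuot z (s.1 c)) h
    rw [← B.θ_probe z y, hprobe, B.θ_probe]
  · rintro ⟨s, hs⟩
    choose β hβ using fun c => B.exists_mk_eq_of_φ_eq (hs c)
    refine ⟨B.θ β, Subtype.ext <| funext fun c => ?_⟩
    change Quot.mk _ (B.θ β, c) = s c
    rw [← hβ c, mk_apply_eq_mk_θ]

instance (C : Type u) : IsIso (counit C) :=
  haveI (A : NondegComod C) := NondegComod.isIso_of_bijective _ (counit_app_bijective A)
  NatIso.isIso_of_isIso_app _

instance (C : Type u) : IsIso (unit C) :=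
  haveI (B : NeContramod C) := NeContramod.isIso_of_bijective _ (unit_app_bijective B)
  NatIso.isIso_of_isIso_app _

/-- The functor `R` (sections of the structure map) and the functor `L` (the coequalizer
of `η(β,a) = (β a, a)` and `ν(β,a) = (θ β, a)`) are mutually quasi-inverse equivalences
between nondegenerate `C`-comodules and nonempty `C`-contramodules: there is an
equivalence of categories whose two functors act on objects by sections and by the
coequalizer, respectively. -/
theorem stmt_11 (C : Type u) :
    ∃ e : NondegComod C ≌ NeContramod C,
      (∀ A : NondegComod C,
        (e.functor.obj A).Y = {s : C → A.X // ∀ c, A.φ (s c) = c}) ∧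
      (∀ B : NeContramod C,
        (e.inverse.obj B).X =
          Quot (fun p q : B.Y × C =>
            ∃ (β : C → B.Y) (a : C), p = (β a, a) ∧ q = (B.θ β, a))) :=
  ⟨.mk (sectionsFunctor C) (coequalizerFunctor C) (asIso (counit C)).symm
    (asIso (unit C)).symm, fun _ => rfl, fun _ => rfl⟩
end

section
/- A topological space X is a presentable object in the category of topological spaces (i.e., Hom(X, −) preserves λ-directed colimits for some regular cardinal λ) if and only if X is discrete. -/
/-!
A discrete space `X` is `discrete.obj X`, and `discrete ⊣ forget` with `forget` cocontinuous,
so `X` is `κ`-presentable as soon as its underlying set is, i.e. as soon as `#X < κ`.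

Conversely, over `I = κ.ord.ToType` consider the topologies `tailTopology i` on `WithTop I`:
a set is open if it is everything or misses `Iic i`, and every open set containing `⊤` contains
a tail of `I`. They get coarser as `i` grows and their intersection is indiscrete, so the colimit
of the chain of identity maps is indiscrete. For `A ⊆ X`, the map sending `A` to `⊤` and its
complement to a point `j₀` is therefore continuous into the colimit. If `Hom(X, −)` preserves
this colimit, the map is continuous for some `tailTopology i`, where `Ioi β` with `i, j₀ ≤ β`
is open; its preimage is `A`.
-/

open CategoryTheory Limits Opposite Set Filter Topology
open scoped Cardinal

universe u

namespace CategoryTheory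

lemma isCardinalFiltered_iff_forall_exists_le (J : Type u) [Preorder J] (κ : Cardinal.{u})
    [Fact κ.IsRegular] :
    IsCardinalFiltered J κ ↔ ∀ S : Set J, #S < κ → ∃ j : J, ∀ i ∈ S, i ≤ j := by
  refine ⟨fun _ S hS => ?_, fun h => isCardinalFiltered_preorder J κ fun K s hK => ?_⟩
  · have hS' : HasCardinalLT S κ := (hasCardinalLT_iff_cardinal_mk_lt _ _).mpr hS
    exact ⟨IsCardinalFiltered.max (fun i : S => i.1) hS',
      fun i hi => leOfHom (IsCardinalFiltered.toMax (fun i : S => i.1) hS' ⟨i, hi⟩)⟩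
  · obtain ⟨j, hj⟩ := h (range s) (Cardinal.mk_range_le.trans_lt hK)
    exact ⟨j, fun k => hj _ (mem_range_self k)⟩

end CategoryTheory

namespace WithTop

variable {I : Type u} [Preorder I]

abbrev tailTopology (i : I) : TopologicalSpace (WithTop I) where
  IsOpen U := (∀ j ≤ i, (j : WithTop I) ∈ U → U = univ) ∧
    (⊤ ∈ U → ∀ᶠ j : I in atTop, (j : WithTop I) ∈ U)
  isOpen_univ := ⟨fun _ _ _ => rfl, fun _ => univ_mem' fun _ => trivial⟩
  isOpen_inter U V hU hV := by
    refine ⟨fun j hj hUV => ?_, fun hUV => (hU.2 hUV.1).and (hV.2 hUV.2)⟩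
    rw [hU.1 j hj hUV.1, hV.1 j hj hUV.2, inter_self]
  isOpen_sUnion S hS := by
    refine ⟨fun j hj => ?_,
      fun ⟨U, hUS, hU⟩ => ((hS U hUS).2 hU).mono fun j hj => ⟨U, hUS, hj⟩⟩
    rintro ⟨U, hUS, hU⟩
    exact eq_univ_of_univ_subset ((hS U hUS).1 j hj hU ▸ subset_sUnion_of_mem hUS)

lemma isOpen_tailTopology_iff {i : I} {U : Set (WithTop I)} :
    IsOpen[tailTopology i] U ↔ (∀ j ≤ i, (j : WithTop I) ∈ U → U = univ) ∧
      (⊤ ∈ U → ∀ᶠ j : I in atTop, (j : WithTop I) ∈ U) :=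
  Iff.rfl

lemma tailTopology_mono : Monotone (tailTopology (I := I)) := fun _ _ hii' _ hU =>
  ⟨fun j hj => hU.1 j (hj.trans hii'), hU.2⟩

lemma iSup_tailTopology [Nonempty I] [IsDirected I (· ≤ ·)] :
    ⨆ i, tailTopology (I := I) i = ⊤ := by
  refine top_unique fun U hU => ?_
  simp only [isOpen_iSup_iff, isOpen_tailTopology_iff] at hU
  rw [TopologicalSpace.isOpen_top_iff]
  refine U.eq_empty_or_nonempty.imp_right fun ⟨x, hx⟩ => ?_
  obtain ⟨j, hj⟩ : ∃ j : I, (j : WithTop I) ∈ U := by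
    induction x with
    | top => exact ((hU (Classical.arbitrary I)).2 hx).exists
    | coe j => exact ⟨j, hx⟩
  exact (hU j).1 j le_rfl hj

lemma isOpen_Ioi_tailTopology [NoMaxOrder I] {i β : I} (hiβ : i ≤ β) :
    IsOpen[tailTopology i] (Ioi (β : WithTop I)) :=
  isOpen_tailTopology_iff.mpr ⟨fun _ hji hj => absurd (hji.trans hiβ) (coe_lt_coe.mp hj).not_ge,
    fun _ => (eventually_gt_atTop β).mono fun _ => coe_lt_coe.mpr⟩

end WithTop

namespace TopCat

section MonotoneTopology

variable {I : Type*} [Preorder I] {T : Type u} {t : I → TopologicalSpace T}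

def monotoneTopologyDiagram (ht : Monotone t) : I ⥤ TopCat.{u} where
  obj i := @TopCat.of T (t i)
  map f := @TopCat.ofHom _ _ (t _) (t _) <|
    @ContinuousMap.mk _ _ (t _) (t _) id (continuous_id_of_le (ht (leOfHom f)))

def monotoneTopologyCocone (ht : Monotone t) : Cocone (monotoneTopologyDiagram ht) where
  pt := @TopCat.of T (⨆ i, t i)
  ι.app i := @TopCat.ofHom _ _ (t i) (⨆ i, t i) <|
    @ContinuousMap.mk _ _ (t i) (⨆ i, t i) id (continuous_id_of_le (le_iSup t i))

lemma coe_ι_app_monotoneTopologyDiagram_eq [IsDirected I (· ≤ ·)] (ht : Monotone t)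
    (s : Cocone (monotoneTopologyDiagram ht)) (i j : I) : ⇑(s.ι.app i) = ⇑(s.ι.app j) := by
  obtain ⟨k, hik, hjk⟩ := directed_of (· ≤ ·) i j
  have hi : ⇑(s.ι.app i) = ⇑(s.ι.app k) := (congrArg (⇑) (s.w (homOfLE hik))).symm
  have hj : ⇑(s.ι.app j) = ⇑(s.ι.app k) := (congrArg (⇑) (s.w (homOfLE hjk))).symm
  exact hi.trans hj.symm

noncomputable def isColimitMonotoneTopologyCocone [IsDirected I (· ≤ ·)] [Nonempty I]
    (ht : Monotone t) : IsColimit (monotoneTopologyCocone ht) where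
  desc s := @TopCat.ofHom _ _ (⨆ i, t i) _ <|
    @ContinuousMap.mk _ _ (⨆ i, t i) _ (s.ι.app (Classical.arbitrary I)) <|
      continuous_iSup_dom.mpr fun i =>
        coe_ι_app_monotoneTopologyDiagram_eq ht s i _ ▸ (s.ι.app i).hom.continuous
  fac s i := TopCat.ext fun x =>
    congrFun (coe_ι_app_monotoneTopologyDiagram_eq ht s (Classical.arbitrary I) i) x
  uniq _ _ hm := TopCat.ext fun x =>
    ConcreteCategory.congr_hom (hm (Classical.arbitrary I)) x

end MonotoneTopology

open WithTop in
theorem discreteTopology_of_preservesColimitsOfShape (X : TopCat.{u}) (I : Type u) [Preorder I]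
    [IsDirected I (· ≤ ·)] [Nonempty I] [NoMaxOrder I]
    [PreservesColimitsOfShape I (coyoneda.obj (op X))] : DiscreteTopology X := by
  refine discreteTopology_iff_forall_isOpen.mpr fun A => ?_
  classical
  let c := monotoneTopologyCocone (tailTopology_mono (I := I))
  let j₀ := Classical.arbitrary I
  let χ : X → WithTop I := fun x => if x ∈ A then ⊤ else j₀
  have hχ : Continuous[_, ⨆ i, tailTopology i] χ := by
    rw [iSup_tailTopology]
    exact continuous_top
  let χHom : X ⟶ c.pt :=
    @TopCat.ofHom _ _ _ (⨆ i, tailTopology i) <|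
      @ContinuousMap.mk _ _ _ (⨆ i, tailTopology i) χ hχ
  obtain ⟨i, g, hg⟩ := Types.jointly_surjective _
    (isColimitOfPreserves (coyoneda.obj (op X)) (isColimitMonotoneTopologyCocone _)) χHom
  let g : X ⟶ (monotoneTopologyDiagram tailTopology_mono).obj i := g
  have hg : g ≫ c.ι.app i = χHom := hg
  have hgχ : (⇑g : X → WithTop I) = χ := congrArg (⇑) hg
  have hχi : Continuous[_, tailTopology i] χ := hgχ ▸ g.hom.continuous
  obtain ⟨β, hiβ, hj₀β⟩ := directed_of (· ≤ ·) i j₀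
  have hA : A = χ ⁻¹' Ioi (β : WithTop I) := by
    ext x
    by_cases hx : x ∈ A <;> simp [χ, hx, hj₀β.not_gt]
  exact hA ▸
    @Continuous.isOpen_preimage _ _ _ (tailTopology i) χ hχi _ (isOpen_Ioi_tailTopology hiβ)

theorem isCardinalPresentable_of_discreteTopology (X : TopCat.{u}) [DiscreteTopology X]
    {κ : Cardinal.{u}} [Fact κ.IsRegular] (hX : HasCardinalLT X κ) :
    IsCardinalPresentable X κ := by
  have := hX.isCardinalPresentable
  have := adj₁.isCardinalPresentable_leftAdjoint_obj κ X
  exact isCardinalPresentable_of_iso (isoOfHomeo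
    { toEquiv := Equiv.refl X
      continuous_toFun := continuous_of_discreteTopology
      continuous_invFun := continuous_of_discreteTopology } : discrete.obj X ≅ X) κ

end TopCat

/-- A topological space `X` is a presentable object of the category of topological spaces
(i.e. `Hom(X, −)` preserves `κ`-directed colimits for some regular cardinal `κ`) if and
only if `X` is discrete. -/
theorem stmt_19 (X : TopCat.{u}) :
    (∃ κ : Cardinal.{u}, κ.IsRegular ∧
      ∀ (J : Type u) [Preorder J],
        (∀ S : Set J, Cardinal.mk S < κ → ∃ j : J, ∀ i ∈ S, i ≤ j) →
        Nonempty (Limits.PreservesColimitsOfShape J (coyoneda.obj (Opposite.op X)))) ↔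
    DiscreteTopology X := by
  constructor
  · rintro ⟨κ, hκ, hX⟩
    have : Fact κ.IsRegular := ⟨hκ⟩
    have : NoMaxOrder κ.ord.ToType := Cardinal.noMaxOrder hκ.aleph0_le
    have : Nonempty κ.ord.ToType := IsCardinalFiltered.nonempty _ κ
    obtain ⟨_⟩ :=
      hX κ.ord.ToType ((isCardinalFiltered_iff_forall_exists_le _ κ).mp inferInstance)
    exact X.discreteTopology_of_preservesColimitsOfShape κ.ord.ToType
  · intro
    obtain ⟨κ, hκ, hXκ⟩ := HasCardinalLT.exists_regular_cardinal.{u} X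
    have : Fact κ.IsRegular := ⟨hκ⟩
    have := X.isCardinalPresentable_of_discreteTopology hXκ
    refine ⟨κ, hκ, fun J _ hJ => ?_⟩
    have := (isCardinalFiltered_iff_forall_exists_le J κ).mpr hJ
    exact ⟨preservesColimitsOfShape_of_isCardinalPresentable X κ J⟩
end
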